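/- arXiv:2506.09803 — 4 statements merged into one kernel-verified Lean document; each statement's English description precedes it below -/
import Mathlib

section
/- The multi-bit mechanism satisfies ε-local differential privacy: for any x, x' ∈ [α, β] and any output c ∈ {−1, 1}, Pr[M(x) = c] ≤ e^ε · Pr[M(x') = c]. -/
/-- Probability that the multi-bit mechanism on input `x ∈ [α, β]` outputs `c ∈ {-1, 1}`. -/
noncomputable def mbProb (α β ε x c : ℝ) : ℝ :=
  if c = 1 then
    1 / (Real.exp ε + 1) + (x - α) / (β - α) * ((Real.exp ε - 1) / (Real.exp ε + 1))
  else
    Real.exp ε / (Real.exp ε + 1) - (x - α) / (β - α) * ((Real.exp ε - 1) / (Real.exp ε + 1))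

/-- The multi-bit mechanism satisfies ε-local differential privacy. -/
theorem multibit_ldp (α β ε : ℝ) (hαβ : α < β) (hε : 0 < ε)
    (x x' : ℝ) (hx : x ∈ Set.Icc α β) (hx' : x' ∈ Set.Icc α β)
    (c : ℝ) (hc : c ∈ ({-1, 1} : Set ℝ)) :
    mbProb α β ε x c ≤ Real.exp ε * mbProb α β ε x' c := by
  obtain ⟨hx1, hx2⟩ := hx
  obtain ⟨hx'1, hx'2⟩ := hx'
  have hE : 1 < Real.exp ε := by
    have := Real.exp_lt_exp.mpr hε; simpa using this
  have hba : (0:ℝ) < β - α := by linarith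
  set t := (x - α) / (β - α) with ht
  set t' := (x' - α) / (β - α) with ht'
  have ht0 : 0 ≤ t := div_nonneg (by linarith) hba.le
  have ht1 : t ≤ 1 := (div_le_one hba).mpr (by linarith)
  have ht'0 : 0 ≤ t' := div_nonneg (by linarith) hba.le
  have ht'1 : t' ≤ 1 := (div_le_one hba).mpr (by linarith)
  set E := Real.exp ε with hEdef
  have hE1 : (0:ℝ) < E + 1 := by linarith
  unfold mbProb
  split_ifs with h
  · rw [← hEdef, ← ht, ← ht',
      show 1/(E+1) + t*((E-1)/(E+1)) = (1 + t*(E-1))/(E+1) by field_simp,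
      show 1/(E+1) + t'*((E-1)/(E+1)) = (1 + t'*(E-1))/(E+1) by field_simp,
      ← mul_div_assoc, div_le_div_iff₀ hE1 hE1]
    nlinarith [mul_nonneg (mul_nonneg ht'0 (by linarith : (0:ℝ) ≤ E - 1)) hE1.le,
      mul_nonneg (mul_nonneg (by linarith : (0:ℝ) ≤ 1 - t) (by linarith : (0:ℝ) ≤ E - 1)) hE1.le]
  · rw [← hEdef, ← ht, ← ht',
      show E/(E+1) - t*((E-1)/(E+1)) = (E - t*(E-1))/(E+1) by field_simp,
      show E/(E+1) - t'*((E-1)/(E+1)) = (E - t'*(E-1))/(E+1) by field_simp,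
      ← mul_div_assoc, div_le_div_iff₀ hE1 hE1]
    nlinarith [mul_nonneg (mul_nonneg ht0 (by linarith : (0:ℝ) ≤ E - 1)) hE1.le,
      mul_nonneg (mul_nonneg (by linarith : (0:ℝ) ≤ 1 - t') (by linarith : (0:ℝ) ≤ E - 1)) hE1.le,
      mul_nonneg (mul_nonneg (by linarith : (0:ℝ) ≤ 1 - t') (by linarith : (0:ℝ) ≤ E - 1)) (by nlinarith : (0:ℝ) ≤ E*(E+1))]
end

section
/- The calibrated multi-bit mechanism is unbiased: if x' is the output of the multi-bit mechanism on input x ∈ [α, β], then E[(α+β)/2 + ((β−α)/2)·((e^ε+1)/(e^ε−1))·x'] = x. -/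
/-- The calibrated multi-bit mechanism is unbiased: the expectation of the
affine calibration `(α+β)/2 + ((β−α)/2)·((e^ε+1)/(e^ε−1))·x'` over the
two-point output distribution of the multi-bit mechanism equals `x`. -/
theorem multibit_calibration_unbiased (α β x ε : ℝ) (hαβ : α < β)
    (hx : x ∈ Set.Icc α β) (hε : 0 < ε) :
    (1 / (Real.exp ε + 1) + (x - α) / (β - α) * ((Real.exp ε - 1) / (Real.exp ε + 1))) *
        ((α + β) / 2 + (β - α) / 2 * ((Real.exp ε + 1) / (Real.exp ε - 1)) * 1) +
      (Real.exp ε / (Real.exp ε + 1) - (x - α) / (β - α) * ((Real.exp ε - 1) / (Real.exp ε + 1))) *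
        ((α + β) / 2 + (β - α) / 2 * ((Real.exp ε + 1) / (Real.exp ε - 1)) * (-1))
      = x := by
  have h1 : Real.exp ε - 1 ≠ 0 := by
    have := Real.add_one_le_exp ε
    linarith
  have h2 : Real.exp ε + 1 ≠ 0 := by positivity
  have h3 : β - α ≠ 0 := by linarith
  field_simp
  ring
end

section
/- The piecewise mechanism is unbiased: for input x ∈ [−1, 1], the expected value of the output, ∫_{l(x)}^{r(x)} c·p dc + ∫_{−s}^{l(x)} c·(p/e^ε) dc + ∫_{r(x)}^{s} c·(p/e^ε) dc, equals x. -/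
/-- The piecewise mechanism is unbiased: the expected value of the output equals `x`. -/
theorem piecewise_unbiased (ε x : ℝ) (hε : 0 < ε)
    (hx : x ∈ Set.Icc (-1 : ℝ) 1) :
    let s := (Real.exp (ε / 2) + 1) / (Real.exp (ε / 2) - 1)
    let p := (Real.exp ε - Real.exp (ε / 2)) / (2 * Real.exp (ε / 2) + 2)
    let l := (s + 1) / 2 * x - (s - 1) / 2
    let r := l + s - 1
    (∫ c in l..r, c * p) + (∫ c in (-s)..l, c * (p / Real.exp ε)) +
      (∫ c in r..s, c * (p / Real.exp ε)) = x := by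
  intro s p l r
  have hint : ∀ a b k : ℝ, (∫ c in a..b, c * k) = (b^2 - a^2) / 2 * k := by
    intro a b k
    rw [intervalIntegral.integral_mul_const, integral_id]
    try ring
  rw [hint, hint, hint]
  have ht1 : (1:ℝ) < Real.exp (ε / 2) := by
    rw [Real.one_lt_exp_iff]; positivity
  set t := Real.exp (ε / 2) with htdef
  have he : Real.exp ε = t ^ 2 := by
    rw [htdef, ← Real.exp_nat_mul]; ring_nf
  have ht0 : t - 1 ≠ 0 := by linarith
  have ht2 : t + 1 ≠ 0 := by linarith
  have ht3 : t ≠ 0 := by positivity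
  show (r^2 - l^2)/2 * p + (l^2 - (-s)^2)/2 * (p / Real.exp ε)
      + (s^2 - r^2)/2 * (p / Real.exp ε) = x
  simp only [he, p, r, l, s, ← htdef]
  field_simp
  ring
end

section
/- The piecewise mechanism satisfies ε-LDP: for any x, x' ∈ [−1,1] and any output c ∈ [−s, s], the ratio of output densities f_x(c)/f_{x'}(c) is at most e^ε. -/
/-- Output density of the piecewise mechanism on input `x` at point `c`. -/
noncomputable def pmDensity (ε x c : ℝ) : ℝ :=
  let s := (Real.exp (ε / 2) + 1) / (Real.exp (ε / 2) - 1)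
  let p := (Real.exp ε - Real.exp (ε / 2)) / (2 * Real.exp (ε / 2) + 2)
  let l := (s + 1) / 2 * x - (s - 1) / 2
  let r := l + s - 1
  if l ≤ c ∧ c ≤ r then p else p / Real.exp ε

/-- The piecewise mechanism satisfies ε-LDP: the ratio of output densities
is at most `e^ε`. -/
theorem piecewise_ldp (ε : ℝ) (hε : 0 < ε) (x x' : ℝ)
    (hx : x ∈ Set.Icc (-1 : ℝ) 1) (hx' : x' ∈ Set.Icc (-1 : ℝ) 1) (c : ℝ)
    (hc : c ∈ Set.Icc (-((Real.exp (ε / 2) + 1) / (Real.exp (ε / 2) - 1)))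
      ((Real.exp (ε / 2) + 1) / (Real.exp (ε / 2) - 1))) :
    pmDensity ε x c / pmDensity ε x' c ≤ Real.exp ε := by
  have hE : 0 < Real.exp ε := Real.exp_pos ε
  have hE1 : 1 ≤ Real.exp ε := by
    rw [show (1:ℝ) = Real.exp 0 by simp]
    exact Real.exp_le_exp.mpr hε.le
  have hp : 0 < (Real.exp ε - Real.exp (ε / 2)) / (2 * Real.exp (ε / 2) + 2) := by
    apply div_pos
    · have : Real.exp (ε / 2) < Real.exp ε := Real.exp_lt_exp.mpr (by linarith)
      linarith
    · have := Real.exp_pos (ε / 2); linarith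
  unfold pmDensity
  simp only
  set p := (Real.exp ε - Real.exp (ε / 2)) / (2 * Real.exp (ε / 2) + 2) with hpdef
  split_ifs with h1 h2 h2
  · rw [div_self hp.ne']; exact hE1
  · rw [div_div_eq_mul_div, mul_comm, mul_div_assoc, div_self hp.ne', mul_one]
  · rw [div_right_comm, div_self hp.ne', div_le_iff₀ hE]
    nlinarith
  · rw [div_self (by positivity : p / Real.exp ε ≠ 0)]; exact hE1
end
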